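/- Let $a, b, q \in (0,1)$ with $a > q$, $b > q$, $a + b > 1$ (for convergence). Then $B(a,b)\,{}_3F_2(a, q, b; a+b, q+1; 1) = q \int\int_{E} x^{a-q-1} y^{b-q-1} (x+y-1)^{q-1}\, dx\, dy$ where $E = \{(x,y) \in [0,1]^2 : x + y \geq 1\}$. -/

import Mathlib

/-!
For fixed `x ∈ (0,1)` the Möbius substitution `y = (1 - x) / (1 - x w)` maps `w ∈ (0,1)` onto
the fiber `y ∈ (1 - x, 1)` of the region and turns the inner integral into
`x^(a-1) (1-x)^(b-1) ∫₀¹ w^(q-1) (1 - x w)^(-b) dw`. Expanding `(1 - x w)^(-b)` by the binomial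
series and integrating term by term (Tonelli: everything is nonnegative, so we work in `ℝ≥0∞`)
gives `∑ₙ (b)ₙ / (n! (q + n)) · B(a + n, b)`. Since `B(a + n, b) = B(a, b) (a)ₙ / (a + b)ₙ` and
`q / (q + n) = (q)ₙ / (q + 1)ₙ`, this is `B(a, b) ₃F₂(a, q, b; a + b, q + 1; 1) / q`.
-/

open Finset MeasureTheory

/-- Pochhammer (rising factorial) symbol `(x)_n`. -/
noncomputable def poch (x : ℝ) (n : ℕ) : ℝ := ∏ k ∈ Finset.range n, (x + k)

/-- Generalized hypergeometric series ₃F₂. -/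
noncomputable def F32 (a₁ a₂ a₃ b₁ b₂ z : ℝ) : ℝ :=
  ∑' n : ℕ, (poch a₁ n * poch a₂ n * poch a₃ n) /
    (poch b₁ n * poch b₂ n * n.factorial) * z ^ n

/-- Beta function. -/
noncomputable def Beta (a b : ℝ) : ℝ := Real.Gamma a * Real.Gamma b / Real.Gamma (a + b)

open Set
open scoped ENNReal

lemma poch_pos {x : ℝ} (hx : 0 < x) (n : ℕ) : 0 < poch x n :=
  prod_pos fun _ _ => by positivity

lemma poch_mul_add_natCast (x : ℝ) (n : ℕ) : poch x n * (x + n) = x * poch (x + 1) n := by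
  have h := (prod_range_succ (fun k : ℕ => x + k) n).symm.trans
    (prod_range_succ' (fun k : ℕ => x + k) n)
  simp only [Nat.cast_add, Nat.cast_one, Nat.cast_zero, add_zero] at h
  rw [poch, poch, h, mul_comm]
  congr 1
  exact prod_congr rfl fun k _ => by ring

lemma Gamma_add_natCast {x : ℝ} (hx : 0 < x) (n : ℕ) :
    Real.Gamma (x + n) = Real.Gamma x * poch x n := by
  induction n with
  | zero => simp [poch]
  | succ n ih =>
    rw [Nat.cast_succ, ← add_assoc, Real.Gamma_add_one (by positivity), ih, poch, poch,
      prod_range_succ]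
    ring

lemma Beta_pos {u v : ℝ} (hu : 0 < u) (hv : 0 < v) : 0 < Beta u v := by
  have := Real.Gamma_pos_of_pos hu
  have := Real.Gamma_pos_of_pos hv
  have := Real.Gamma_pos_of_pos (add_pos hu hv)
  unfold Beta
  positivity

lemma Beta_one_right {u : ℝ} (hu : 0 < u) : Beta u 1 = 1 / u := by
  rw [Beta, Real.Gamma_one, mul_one, Real.Gamma_add_one hu.ne',
    div_mul_cancel_right₀ (Real.Gamma_pos_of_pos hu).ne', one_div]

lemma Beta_add_natCast_left {u v : ℝ} (hu : 0 < u) (hv : 0 < v) (n : ℕ) :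
    Beta (u + n) v = Beta u v * poch u n / poch (u + v) n := by
  have := (Real.Gamma_pos_of_pos (add_pos hu hv)).ne'
  have := (poch_pos (add_pos hu hv) n).ne'
  rw [Beta, Beta, add_right_comm, Gamma_add_natCast hu, Gamma_add_natCast (add_pos hu hv)]
  field_simp

lemma poch_eq_ascPochhammer_eval (x : ℝ) (n : ℕ) : poch x n = (ascPochhammer ℝ n).eval x := by
  induction n with
  | zero => simp [poch]
  | succ n ih => rw [poch, prod_range_succ, ← poch, ih, ascPochhammer_succ_eval]

lemma choose_add_sub_one_eq_poch_div (b : ℝ) (n : ℕ) :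
    Ring.choose (b + n - 1) n = poch b n / n.factorial := by
  rw [← Ring.multichoose_eq, eq_div_iff (by positivity), poch_eq_ascPochhammer_eval, mul_comm,
    ← nsmul_eq_mul, Ring.factorial_nsmul_multichoose_eq_ascPochhammer,
    Polynomial.ascPochhammer_smeval_eq_eval]

lemma hasSum_poch_div_factorial_mul_pow {t : ℝ} (b : ℝ) (ht : |t| < 1) :
    HasSum (fun n : ℕ => poch b n / n.factorial * t ^ n) ((1 - t) ^ (-b)) := by
  have h := (Real.one_div_one_sub_rpow_hasFPowerSeriesOnBall_zero b).hasSum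
    (y := t) (by simpa [← ofReal_norm] using ht)
  have ht1 : 0 ≤ 1 - t := by linarith [le_abs_self t]
  simpa [FormalMultilinearSeries.ofScalars_apply_eq, choose_add_sub_one_eq_poch_div,
    Real.rpow_neg ht1, mul_comm] using h

lemma ofReal_rpow_mul_one_sub_rpow {x : ℝ} (hx : x ∈ Icc (0:ℝ) 1) (u v : ℝ) :
    (((x ^ (u - 1) * (1 - x) ^ (v - 1) : ℝ)) : ℂ)
      = (x : ℂ) ^ ((u : ℂ) - 1) * (1 - (x : ℂ)) ^ ((v : ℂ) - 1) := by
  push_cast [Complex.ofReal_cpow hx.1, Complex.ofReal_cpow (sub_nonneg.2 hx.2)]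
  rfl

lemma integrableOn_rpow_mul_one_sub_rpow {u v : ℝ} (hu : 0 < u) (hv : 0 < v) :
    IntegrableOn (fun x : ℝ => x ^ (u - 1) * (1 - x) ^ (v - 1)) (Ioo 0 1) := by
  have h := (intervalIntegrable_iff_integrableOn_Ioo_of_le zero_le_one).1
    (Complex.betaIntegral_convergent (u := u) (v := v) (by simpa) (by simpa))
  refine IntegrableOn.congr_fun
    (f := fun x : ℝ => ((x : ℂ) ^ ((u : ℂ) - 1) * (1 - (x : ℂ)) ^ ((v : ℂ) - 1)).re)
    h.re (fun x hx => ?_) measurableSet_Ioo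
  simp only [← ofReal_rpow_mul_one_sub_rpow (Ioo_subset_Icc_self hx), Complex.ofReal_re]

lemma integral_rpow_mul_one_sub_rpow {u v : ℝ} (hu : 0 < u) (hv : 0 < v) :
    ∫ x in (0:ℝ)..1, x ^ (u - 1) * (1 - x) ^ (v - 1) = Beta u v := by
  apply Complex.ofReal_injective
  rw [← intervalIntegral.integral_ofReal, intervalIntegral.integral_congr
    (fun x hx => ofReal_rpow_mul_one_sub_rpow (by rwa [Set.uIcc_of_le zero_le_one] at hx) u v),
    ← Complex.betaIntegral, Complex.betaIntegral_eq_Gamma_mul_div _ _ (by simpa) (by simpa),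
    ← Complex.ofReal_add]
  simp only [Beta, Complex.Gamma_ofReal, Complex.ofReal_div, Complex.ofReal_mul]

lemma lintegral_rpow_mul_one_sub_rpow {u v : ℝ} (hu : 0 < u) (hv : 0 < v) :
    ∫⁻ x in Ioo (0:ℝ) 1, ENNReal.ofReal (x ^ (u - 1) * (1 - x) ^ (v - 1))
      = ENNReal.ofReal (Beta u v) := by
  rw [← integral_rpow_mul_one_sub_rpow hu hv, intervalIntegral.integral_of_le zero_le_one,
    ← setIntegral_congr_set Ioo_ae_eq_Ioc, ofReal_integral_eq_lintegral_ofReal]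
  · exact integrableOn_rpow_mul_one_sub_rpow hu hv
  · filter_upwards [ae_restrict_mem measurableSet_Ioo] with x hx
    exact mul_nonneg (Real.rpow_nonneg hx.1.le _) (Real.rpow_nonneg (by linarith [hx.2]) _)

lemma lintegral_rpow_mul_one_sub_rpow_mul_tsum {u v : ℝ} (hu : 0 < u) (hv : 0 < v) {c : ℕ → ℝ}
    (hc : ∀ n, 0 ≤ c n) :
    ∫⁻ x in Ioo (0:ℝ) 1, ENNReal.ofReal (x ^ (u - 1) * (1 - x) ^ (v - 1))
        * ∑' n, ENNReal.ofReal (c n * x ^ n)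
      = ∑' n, ENNReal.ofReal (c n * Beta (u + n) v) := by
  have hsplit : ∀ x ∈ Ioo (0:ℝ) 1,
      ENNReal.ofReal (x ^ (u - 1) * (1 - x) ^ (v - 1)) * ∑' n, ENNReal.ofReal (c n * x ^ n)
        = ∑' n, ENNReal.ofReal (c n)
            * ENNReal.ofReal (x ^ (u + n - 1) * (1 - x) ^ (v - 1)) := by
    intro x ⟨hx0, hx1⟩
    rw [← ENNReal.tsum_mul_left]
    refine tsum_congr fun n => ?_
    have hpow : x ^ (u + n - 1) = x ^ (u - 1) * x ^ n := by
      rw [add_sub_right_comm, Real.rpow_add hx0, Real.rpow_natCast]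
    rw [← ENNReal.ofReal_mul (hc n), ← ENNReal.ofReal_mul (by positivity), hpow]
    ring_nf
  rw [setLIntegral_congr_fun measurableSet_Ioo hsplit, lintegral_tsum (by fun_prop)]
  refine tsum_congr fun n => ?_
  rw [lintegral_const_mul _ (by fun_prop), lintegral_rpow_mul_one_sub_rpow (by positivity) hv,
    ← ENNReal.ofReal_mul (hc n)]

lemma lintegral_rpow_mul_one_sub_mul_rpow_neg {b q x : ℝ} (hq : 0 < q) (hb : 0 < b)
    (hx0 : 0 < x) (hx1 : x < 1) :
    ∫⁻ w in Ioo (0:ℝ) 1, ENNReal.ofReal (w ^ (q - 1) * (1 - x * w) ^ (-b))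
      = ∑' n, ENNReal.ofReal (poch b n / n.factorial / (q + n) * x ^ n) := by
  have hc : ∀ n : ℕ, 0 ≤ poch b n / n.factorial * x ^ n := fun n => by
    have := poch_pos hb n
    positivity
  -- Each term is then a Beta integral with second parameter `1`.
  have hexpand : ∀ w ∈ Ioo (0:ℝ) 1,
      ENNReal.ofReal (w ^ (q - 1) * (1 - x * w) ^ (-b))
        = ENNReal.ofReal (w ^ (q - 1) * (1 - w) ^ ((1:ℝ) - 1))
          * ∑' n, ENNReal.ofReal (poch b n / n.factorial * x ^ n * w ^ n) := by
    intro w ⟨hw0, hw1⟩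
    have hxw : |x * w| < 1 := by
      rw [abs_of_pos (mul_pos hx0 hw0)]
      nlinarith
    have hsum := hasSum_poch_div_factorial_mul_pow b hxw
    simp only [mul_pow, ← mul_assoc] at hsum
    rw [sub_self, Real.rpow_zero, mul_one, ← hsum.tsum_eq, ENNReal.ofReal_mul (by positivity),
      ENNReal.ofReal_tsum_of_nonneg (fun n => mul_nonneg (hc n) (by positivity)) hsum.summable]
  rw [setLIntegral_congr_fun measurableSet_Ioo hexpand,
    lintegral_rpow_mul_one_sub_rpow_mul_tsum hq one_pos hc]
  refine tsum_congr fun n => ?_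
  rw [Beta_one_right (by positivity)]
  ring_nf

lemma image_div_one_sub_mul_Ioo {x : ℝ} (hx0 : 0 < x) (hx1 : x < 1) :
    (fun w => (1 - x) / (1 - x * w)) '' Ioo 0 1 = Ioo (1 - x) 1 := by
  ext y
  constructor
  · rintro ⟨w, ⟨hw0, hw1⟩, rfl⟩
    have hd : 0 < 1 - x * w := by nlinarith
    constructor
    · rw [lt_div_iff₀ hd]; nlinarith [mul_pos (mul_pos hx0 hw0) (sub_pos.2 hx1)]
    · rw [div_lt_one hd]; nlinarith
  · rintro ⟨hy0, hy1⟩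
    have hy : 0 < y := by linarith
    refine ⟨(y - (1 - x)) / (x * y), ⟨by apply div_pos <;> nlinarith, ?_⟩, ?_⟩
    · rw [div_lt_one (by positivity)]; nlinarith
    · have : 1 - x * ((y - (1 - x)) / (x * y)) = (1 - x) / y := by field_simp; ring
      simp only [this]
      field_simp [(sub_pos.2 hx1).ne']

lemma injOn_div_one_sub_mul {x : ℝ} (hx0 : 0 < x) (hx1 : x < 1) :
    InjOn (fun w => (1 - x) / (1 - x * w)) (Ioo 0 1) := by
  intro w₁ ⟨_, hw₁⟩ w₂ ⟨_, hw₂⟩ h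
  have h₁ : 0 < 1 - x * w₁ := by nlinarith
  have h₂ : 0 < 1 - x * w₂ := by nlinarith
  rw [div_eq_div_iff h₁.ne' h₂.ne'] at h
  exact mul_left_cancel₀ hx0.ne' (by nlinarith [mul_left_cancel₀ (sub_pos.2 hx1).ne' h])

lemma hasDerivAt_div_one_sub_mul {x w : ℝ} (hw : 1 - x * w ≠ 0) :
    HasDerivAt (fun w => (1 - x) / (1 - x * w)) ((1 - x) * x / (1 - x * w) ^ 2) w := by
  have h : HasDerivAt (fun w => 1 - x * w) (-x) w := by
    simpa using ((hasDerivAt_id w).const_mul x).const_sub 1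
  exact ((hasDerivAt_const w (1 - x)).div h hw).congr_deriv (by ring)

lemma abs_deriv_mul_integrand_div_one_sub_mul {a b q x w y : ℝ} (hx0 : 0 < x) (hx1 : x < 1)
    (hw0 : 0 < w) (hw1 : w < 1) (hy : y = (1 - x) / (1 - x * w)) :
    |(1 - x) * x / (1 - x * w) ^ 2| * (x ^ (a - q - 1) * y ^ (b - q - 1) * (x + y - 1) ^ (q - 1))
      = x ^ (a - 1) * (1 - x) ^ (b - 1) * (w ^ (q - 1) * (1 - x * w) ^ (-b)) := by
  have hu : 0 < 1 - x := sub_pos.2 hx1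
  have hd : 0 < 1 - x * w := by nlinarith
  have hxy : x + y - 1 = (1 - x) * (x * w) / (1 - x * w) := by
    rw [hy]; field_simp; ring
  set d := 1 - x * w
  have hx : x ^ (a - 1) = x ^ (a - q - 1) * x ^ (q - 1) * x := by
    rw [← Real.rpow_add hx0, ← Real.rpow_add_one hx0.ne']; ring_nf
  have hu' : (1 - x) ^ (b - 1) = (1 - x) ^ (b - q - 1) * (1 - x) ^ (q - 1) * (1 - x) := by
    rw [← Real.rpow_add hu, ← Real.rpow_add_one hu.ne']; ring_nf
  have hd' : d ^ b = d ^ (b - q - 1) * d ^ (q - 1) * d ^ 2 := by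
    rw [← Real.rpow_add hd, ← Real.rpow_natCast, ← Real.rpow_add hd]; push_cast; ring_nf
  rw [abs_of_pos (by positivity), hxy, hy, Real.div_rpow hu.le hd.le,
    Real.div_rpow (by positivity) hd.le, Real.mul_rpow hu.le (by positivity),
    Real.mul_rpow hx0.le hw0.le, Real.rpow_neg hd.le, hx, hu', hd']
  have := Real.rpow_pos_of_pos hd (b - q - 1)
  have := Real.rpow_pos_of_pos hd (q - 1)
  field_simp

lemma setLIntegral_prod_fiberwise {α β : Type*} [MeasurableSpace α] [MeasurableSpace β]
    {μ : Measure α} {ν : Measure β} [SFinite ν] {s : Set α} {t : α → Set β}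
    (hs : MeasurableSet s) (hst : MeasurableSet {p : α × β | p.1 ∈ s ∧ p.2 ∈ t p.1})
    {f : α × β → ℝ≥0∞} (hf : Measurable f) :
    ∫⁻ p in {p : α × β | p.1 ∈ s ∧ p.2 ∈ t p.1}, f p ∂μ.prod ν
      = ∫⁻ x in s, ∫⁻ y in t x, f (x, y) ∂ν ∂μ := by
  rw [← lintegral_indicator hst, lintegral_prod _ (hf.indicator hst).aemeasurable,
    ← lintegral_indicator hs]
  congr 1
  funext x
  by_cases hx : x ∈ s
  · have hfiber : t x = Prod.mk x ⁻¹' {p : α × β | p.1 ∈ s ∧ p.2 ∈ t p.1} := by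
      ext y; simp [hx]
    rw [indicator_of_mem hx, ← lintegral_indicator (hfiber ▸ measurable_prodMk_left hst)]
    congr 1
    funext y
    by_cases hy : y ∈ t x <;> simp [hx, hy]
  · simp [indicator, hx]

lemma lintegral_Ioo_one_sub_eq_mul_lintegral {a b q x : ℝ} (hx0 : 0 < x) (hx1 : x < 1) :
    ∫⁻ y in Ioo (1 - x) 1,
        ENNReal.ofReal (x ^ (a - q - 1) * y ^ (b - q - 1) * (x + y - 1) ^ (q - 1))
      = ENNReal.ofReal (x ^ (a - 1) * (1 - x) ^ (b - 1))
        * ∫⁻ w in Ioo (0:ℝ) 1, ENNReal.ofReal (w ^ (q - 1) * (1 - x * w) ^ (-b)) := by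
  have hd : ∀ w ∈ Ioo (0:ℝ) 1, 0 < 1 - x * w := fun w hw => by nlinarith [hw.2]
  rw [← image_div_one_sub_mul_Ioo hx0 hx1, lintegral_image_eq_lintegral_abs_deriv_mul
      measurableSet_Ioo (fun w hw => (hasDerivAt_div_one_sub_mul (hd w hw).ne').hasDerivWithinAt)
      (injOn_div_one_sub_mul hx0 hx1), ← lintegral_const_mul _ (by fun_prop)]
  refine setLIntegral_congr_fun measurableSet_Ioo fun w ⟨hw0, hw1⟩ => ?_
  rw [← ENNReal.ofReal_mul (abs_nonneg _), ← ENNReal.ofReal_mul (by positivity),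
    abs_deriv_mul_integrand_div_one_sub_mul hx0 hx1 hw0 hw1 rfl]

lemma lintegral_triangle_eq_tsum {a b q : ℝ} (ha : 0 < a) (hb : 0 < b) (hq : 0 < q) :
    ∫⁻ p in {p : ℝ × ℝ | 0 ≤ p.1 ∧ p.1 ≤ 1 ∧ 0 ≤ p.2 ∧ p.2 ≤ 1 ∧ 1 ≤ p.1 + p.2},
        ENNReal.ofReal (p.1 ^ (a - q - 1) * p.2 ^ (b - q - 1) * (p.1 + p.2 - 1) ^ (q - 1))
      = ∑' n : ℕ, ENNReal.ofReal (poch b n / n.factorial / (q + n) * Beta (a + n) b) := by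
  have hE : {p : ℝ × ℝ | 0 ≤ p.1 ∧ p.1 ≤ 1 ∧ 0 ≤ p.2 ∧ p.2 ≤ 1 ∧ 1 ≤ p.1 + p.2}
      = {p : ℝ × ℝ | p.1 ∈ Set.Icc 0 1 ∧ p.2 ∈ Set.Icc (1 - p.1) 1} := by
    ext p
    simp only [mem_ofPred_eq, Set.mem_Icc]
    constructor
    · rintro ⟨h1, h2, -, h4, h5⟩
      exact ⟨⟨h1, h2⟩, by linarith, h4⟩
    · rintro ⟨⟨h1, h2⟩, h3, h4⟩
      exact ⟨h1, h2, by linarith, h4, by linarith⟩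
  have hc : ∀ n : ℕ, 0 ≤ poch b n / n.factorial / (q + n) := fun n => by
    have := poch_pos hb n
    positivity
  rw [hE, Measure.volume_eq_prod,
    setLIntegral_prod_fiberwise (t := fun x => Set.Icc (1 - x) 1) measurableSet_Icc
      (by measurability) (by fun_prop), setLIntegral_congr Ioo_ae_eq_Icc.symm,
    ← lintegral_rpow_mul_one_sub_rpow_mul_tsum ha hb hc]
  refine setLIntegral_congr_fun measurableSet_Ioo fun x hx => ?_
  rw [setLIntegral_congr Ioo_ae_eq_Icc.symm, lintegral_Ioo_one_sub_eq_mul_lintegral hx.1 hx.2,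
    lintegral_rpow_mul_one_sub_mul_rpow_neg hq hb hx.1 hx.2]

lemma Beta_mul_F32_summand {a b q : ℝ} (ha : 0 < a) (hb : 0 < b) (hq : 0 < q) (n : ℕ) :
    Beta a b * (poch a n * poch q n * poch b n
        / (poch (a + b) n * poch (q + 1) n * n.factorial) * 1 ^ n)
      = q * (poch b n / n.factorial / (q + n) * Beta (a + n) b) := by
  have hrec := poch_mul_add_natCast q n
  have := (poch_pos (add_pos ha hb) n).ne'
  have := (poch_pos (add_pos hq one_pos) n).ne'
  rw [Beta_add_natCast_left ha hb, one_pow, mul_one]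
  field_simp
  linear_combination (Beta a b * poch a n * poch b n) * hrec

theorem stmt9_general (a b q : ℝ)
    (ha : a ∈ Set.Ioo (0:ℝ) 1) (hb : b ∈ Set.Ioo (0:ℝ) 1) (hq : q ∈ Set.Ioo (0:ℝ) 1) :
    Beta a b * F32 a q b (a + b) (q + 1) 1
      = q * ∫ p in {p : ℝ × ℝ | 0 ≤ p.1 ∧ p.1 ≤ 1 ∧ 0 ≤ p.2 ∧ p.2 ≤ 1 ∧ 1 ≤ p.1 + p.2},
          p.1 ^ (a - q - 1) * p.2 ^ (b - q - 1) * (p.1 + p.2 - 1) ^ (q - 1) := by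
  have hnonneg : 0 ≤ᵐ[volume.restrict
      {p : ℝ × ℝ | 0 ≤ p.1 ∧ p.1 ≤ 1 ∧ 0 ≤ p.2 ∧ p.2 ≤ 1 ∧ 1 ≤ p.1 + p.2}]
      fun p : ℝ × ℝ => p.1 ^ (a - q - 1) * p.2 ^ (b - q - 1) * (p.1 + p.2 - 1) ^ (q - 1) := by
    filter_upwards [ae_restrict_mem (by measurability)] with p hp
    obtain ⟨h1, -, h2, -, h3⟩ := hp
    have : 0 ≤ p.1 + p.2 - 1 := by linarith
    positivity
  rw [integral_eq_lintegral_of_nonneg_ae hnonneg (by fun_prop),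
    lintegral_triangle_eq_tsum ha.1 hb.1 hq.1,
    ENNReal.tsum_toReal_eq fun _ => ENNReal.ofReal_ne_top, F32, ← tsum_mul_left, ← tsum_mul_left]
  refine tsum_congr fun n => ?_
  have := poch_pos hb.1 n
  have := hq.1
  have := Beta_pos (add_pos_of_pos_of_nonneg ha.1 n.cast_nonneg) hb.1
  rw [Beta_mul_F32_summand ha.1 hb.1 hq.1, ENNReal.toReal_ofReal (by positivity)]

theorem stmt9 (a b q : ℝ)
    (ha : a ∈ Set.Ioo (0:ℝ) 1) (hb : b ∈ Set.Ioo (0:ℝ) 1) (hq : q ∈ Set.Ioo (0:ℝ) 1)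
    (haq : q < a) (hbq : q < b) (hab : 1 < a + b) :
    Beta a b * F32 a q b (a + b) (q + 1) 1
      = q * ∫ p in {p : ℝ × ℝ | 0 ≤ p.1 ∧ p.1 ≤ 1 ∧ 0 ≤ p.2 ∧ p.2 ≤ 1 ∧ 1 ≤ p.1 + p.2},
          p.1 ^ (a - q - 1) * p.2 ^ (b - q - 1) * (p.1 + p.2 - 1) ^ (q - 1) :=
  stmt9_general a b q ha hb hq
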